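/- Let G be a simple graph in which every card is ds-completable, let v be a vertex of degree d such that some vertex has degree d−1, let α be the set of vertices of degree d−1, and let a = |N(v) ∩ α|. Then the number of stubs on α satisfies (d−1)|α| ≥ (d−a)|α| + 2a(|α|−a) + a(a−1) + a, which forces |α| ≤ a²/(a+1) < a, a contradiction; hence no such graph exists. -/

import Mathlib

open SimpleGraph Finset
open scoped Classical

variable {V : Type*}

/-- The degree of a vertex `u` in a simple graph `G`. -/
noncomputable def deg (G : SimpleGraph V) (u : V) : ℕ := (G.neighborSet u).ncard

/-- The degree of `u` in the card `G − v` (the vertex-deleted subgraph at `v`). -/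
noncomputable def cardDeg (G : SimpleGraph V) (v u : V) : ℕ := (G.neighborSet u \ {v}).ncard

/-- The card `G − v` is ds-completable: for each degree `d`, the vertices of degree `d`
in `G − v` are either all neighbours of `v` in `G` or all non-neighbours of `v` in `G`. -/
def DsCompletable (G : SimpleGraph V) (v : V) : Prop :=
  ∀ d : ℕ, (∀ u, u ≠ v → cardDeg G v u = d → G.Adj v u) ∨
           (∀ u, u ≠ v → cardDeg G v u = d → ¬ G.Adj v u)

/-- A vertex is bad if the graph contains a vertex of degree one less. -/
def Bad (G : SimpleGraph V) (v : V) : Prop := ∃ w, deg G w + 1 = deg G v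

/-- A vertex is dull if the graph contains a vertex of degree one more. -/
def Dull (G : SimpleGraph V) (v : V) : Prop := ∃ w, deg G w = deg G v + 1

/-- ε(s,t): the number of stubs on `s` used by edges from `s` to `t`
(for disjoint `s`, `t` this is the number of edges between them; for `s = t`
it is twice the number of edges inside `s`). -/
noncomputable def stubs (G : SimpleGraph V) (s t : Finset V) : ℕ :=
  ((s ×ˢ t).filter fun p => G.Adj p.1 p.2).card

/-- A vertex set is neighbourly if no vertex outside the set has a degree one less
than that of a vertex in the set. -/
def Neighbourly (G : SimpleGraph V) (K : Finset V) : Prop :=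
  ∀ u ∉ K, ∀ w ∈ K, deg G u + 1 ≠ deg G w

/-- A vertex set is `d`-neighbourly if it contains a vertex `v` of degree `d` such that
no vertex outside the set has a degree one less than that of any member other than `v`. -/
def DNeighbourly (G : SimpleGraph V) (d : ℕ) (K : Finset V) : Prop :=
  ∃ v ∈ K, deg G v = d ∧ ∀ u ∉ K, ∀ w ∈ K, w ≠ v → deg G u + 1 ≠ deg G w

/-!
If `deg w + 1 = deg v`, then for every neighbour `x ≠ w` of `v`, the card `G − x` gives
`v` and `w` the same degree unless `w ∼ x`; since `v ∼ x`, ds-completability of `G − x`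
forces `w ∼ x`. So `w` sees all of `N(v)` except possibly itself, and sees `v` when it
lies in `N(v)`; either way `deg w ≥ deg v`.
-/

lemma cardDeg_add_one_of_adj [Finite V] {G : SimpleGraph V} {x u : V} (h : G.Adj u x) :
    cardDeg G x u + 1 = deg G u :=
  Set.ncard_sdiff_singleton_add_one h (Set.toFinite _)

lemma cardDeg_of_not_adj {G : SimpleGraph V} {x u : V} (h : ¬ G.Adj u x) :
    cardDeg G x u = deg G u := by
  unfold cardDeg deg
  rw [Set.sdiff_singleton_eq_self (show x ∉ G.neighborSet u from h)]

lemma DsCompletable.adj_of_cardDeg_eq {G : SimpleGraph V} {x u u' : V} (h : DsCompletable G x)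
    (hu : u ≠ x) (hu' : u' ≠ x) (hcd : cardDeg G x u' = cardDeg G x u) (hadj : G.Adj x u) :
    G.Adj x u' := by
  rcases h (cardDeg G x u) with hA | hB
  · exact hA u' hu' hcd
  · exact absurd hadj (hB u hu rfl)

lemma deg_le_deg_of_neighborSet_sdiff_subset [Finite V] {G : SimpleGraph V} {u v : V}
    (h : G.neighborSet v \ {u} ⊆ G.neighborSet u \ {v}) : deg G v ≤ deg G u := by
  have hcard : cardDeg G u v ≤ cardDeg G v u := Set.ncard_le_ncard h (Set.toFinite _)
  by_cases huv : G.Adj u v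
  · have := cardDeg_add_one_of_adj huv
    have := cardDeg_add_one_of_adj huv.symm
    omega
  · rwa [cardDeg_of_not_adj huv, cardDeg_of_not_adj fun h => huv h.symm] at hcard

lemma DsCompletable.adj_of_deg_add_one_eq [Finite V] {G : SimpleGraph V} {x u v : V}
    (h : DsCompletable G x) (hvx : G.Adj v x) (hux : u ≠ x) (hdeg : deg G u + 1 = deg G v) :
    G.Adj u x := by
  by_contra hnot
  have hcd : cardDeg G x u = cardDeg G x v := by
    rw [cardDeg_of_not_adj hnot]
    have := cardDeg_add_one_of_adj hvx
    omega
  exact hnot (h.adj_of_cardDeg_eq hvx.ne hux hcd hvx.symm).symm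

/-- There is no graph in which every card is ds-completable and some vertex is bad:
the stub-counting on the set α of vertices of degree `d_v − 1` yields a contradiction. -/
theorem stmt9 [Fintype V] (G : SimpleGraph V)
    (h : ∀ u : V, DsCompletable G u) (v w : V) (hw : deg G w + 1 = deg G v) :
    False := by
  have hsub : G.neighborSet v \ {w} ⊆ G.neighborSet w \ {v} := by
    rintro x ⟨hvx, hxw⟩
    exact ⟨(h x).adj_of_deg_add_one_eq hvx (Ne.symm hxw) hw, hvx.ne'⟩
  have := deg_le_deg_of_neighborSet_sdiff_subset hsub
  omega
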